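/- For real a and real β with |β| < 1, ∫₀^∞ sin²(a x) · cosh(β x)/(x · sinh(x)) dx = (1/4)·ln( (cosh(2aπ) + cos(βπ)) / (1 + cos(βπ)) ). -/

import Mathlib

/-!
For `x > 0`, `cosh (β x) / sinh x = ∑ₙ (e^{-(2n+1-β)x} + e^{-(2n+1+β)x})`, and all terms are
nonnegative, so the integral is the sum of the integrals `∫₀^∞ sin² (a x) e^{-c x} / x dx`, which
equal `¼ log (1 + (2a/c)²)` (differentiating in `a` gives the Laplace transform of `sin (2 a x)`).
The resulting sum of logarithms is the logarithm of the product
`∏ₙ (1 + t²/(2n+1-β)²) (1 + t²/(2n+1+β)²) = ∏ₙ |1 - w²/(2n+1)²|² / (1 - β²/(2n+1)²)²`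
with `w = β + i t`, `t = 2a`. By Euler's product `cos (π z / 2) = ∏ₙ (1 - z²/(2n+1)²)` it equals
`|cos (π w / 2)|² / cos² (π β / 2) = (cosh (π t) + cos (π β)) / (1 + cos (π β))`.
-/

open Real MeasureTheory Set Filter Topology

lemma integral_exp_neg_mul_mul_sin {c : ℝ} (hc : 0 < c) (b : ℝ) :
    ∫ x in Ioi (0:ℝ), exp (-(c * x)) * sin (b * x) = b / (c ^ 2 + b ^ 2) := by
  -- the imaginary part of `∫ e^{(-c + i b) x} dx = 1 / (c - i b)`
  have hre : (-(c : ℂ) + b * Complex.I).re < 0 := by simpa using hc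
  have hint := integral_exp_mul_complex_Ioi hre 0
  have him : ∀ x : ℝ, exp (-(c * x)) * sin (b * x)
      = RCLike.im (Complex.exp ((-(c : ℂ) + b * Complex.I) * x)) := by
    intro x
    simp [Complex.exp_im]
  simp_rw [him]
  rw [integral_im (integrableOn_exp_mul_complex_Ioi hre 0), hint]
  simp [Complex.normSq_apply, ← sq, neg_div]

lemma sin_sq_div_le_abs (b : ℝ) {x : ℝ} (hx : 0 < x) : sin (b * x) ^ 2 / x ≤ |b| := by
  rw [div_le_iff₀ hx, sq]
  calc sin (b * x) * sin (b * x) ≤ |sin (b * x)| * |sin (b * x)| := by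
        rw [← abs_mul]; exact le_abs_self _
    _ ≤ (|b| * x) * 1 := by
        gcongr
        · simpa [abs_mul, abs_of_pos hx] using abs_sin_le_abs (x := b * x)
        · exact abs_sin_le_one _
    _ = |b| * x := mul_one _

lemma integrableOn_sin_sq_div_mul_exp_neg {c : ℝ} (hc : 0 < c) (b : ℝ) :
    IntegrableOn (fun x => sin (b * x) ^ 2 / x * exp (-(c * x))) (Ioi 0) := by
  refine (((exp_neg_integrableOn_Ioi 0 hc).const_mul |b|)).mono' ?_ ?_
  · refine ContinuousOn.aestronglyMeasurable ?_ measurableSet_Ioi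
    exact ((by fun_prop : Continuous fun x => sin (b * x) ^ 2).continuousOn.div continuousOn_id
      fun x hx => ne_of_gt hx).mul (by fun_prop)
  · refine (ae_restrict_iff' measurableSet_Ioi).2 (Eventually.of_forall fun x (hx : 0 < x) => ?_)
    rw [Real.norm_of_nonneg (by positivity), neg_mul]
    exact mul_le_mul_of_nonneg_right (sin_sq_div_le_abs b hx) (exp_pos _).le

lemma hasDerivAt_integral_sin_sq_div_mul_exp_neg {c : ℝ} (hc : 0 < c) (b₀ : ℝ) :
    HasDerivAt (fun b => ∫ x in Ioi (0:ℝ), sin (b * x) ^ 2 / x * exp (-(c * x)))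
      (2 * b₀ / (c ^ 2 + 4 * b₀ ^ 2)) b₀ := by
  have hderiv (x : ℝ) (hx : 0 < x) (b : ℝ) : HasDerivAt (fun b => sin (b * x) ^ 2 / x * exp (-(c * x)))
      (exp (-(c * x)) * sin (2 * b * x)) b := by
    refine ((((hasDerivAt_mul_const (x := b) x).sin.fun_pow 2).div_const x).mul_const
      (exp (-(c * x)))).congr_deriv ?_
    rw [mul_assoc 2, sin_two_mul]
    field_simp
    ring
  have hval : ∫ x in Ioi (0:ℝ), exp (-(c * x)) * sin (2 * b₀ * x)
      = 2 * b₀ / (c ^ 2 + 4 * b₀ ^ 2) := by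
    rw [integral_exp_neg_mul_mul_sin hc]; ring
  rw [← hval]
  refine (hasDerivAt_integral_of_dominated_loc_of_deriv_le (μ := volume.restrict (Ioi 0))
    (F := fun b x => sin (b * x) ^ 2 / x * exp (-(c * x)))
    (F' := fun b x => exp (-(c * x)) * sin (2 * b * x))
    (bound := fun x => exp (-(c * x)))
    (Metric.ball_mem_nhds b₀ one_pos) ?_ (integrableOn_sin_sq_div_mul_exp_neg hc b₀) ?_ ?_ ?_ ?_).2
  · exact Eventually.of_forall fun b => (integrableOn_sin_sq_div_mul_exp_neg hc b).1
  · exact (Continuous.aestronglyMeasurable (by fun_prop))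
  · refine (ae_restrict_iff' measurableSet_Ioi).2 (Eventually.of_forall fun x _ b _ => ?_)
    rw [norm_mul, Real.norm_of_nonneg (exp_pos _).le]
    exact mul_le_of_le_one_right (exp_pos _).le (abs_sin_le_one _)
  · simpa only [neg_mul, IntegrableOn] using exp_neg_integrableOn_Ioi 0 hc
  · exact (ae_restrict_iff' measurableSet_Ioi).2 <|
      Eventually.of_forall fun x hx b _ => hderiv x hx b

lemma integral_sin_sq_div_mul_exp_neg {c : ℝ} (hc : 0 < c) (b : ℝ) :
    ∫ x in Ioi (0:ℝ), sin (b * x) ^ 2 / x * exp (-(c * x)) = 1 / 4 * log (1 + (2 * b / c) ^ 2) := by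
  have hlog (b₀ : ℝ) : HasDerivAt (fun b => 1 / 4 * log (1 + (2 * b / c) ^ 2))
      (2 * b₀ / (c ^ 2 + 4 * b₀ ^ 2)) b₀ := by
    refine (((((hasDerivAt_id' b₀).const_mul 2).div_const c).fun_pow 2).const_add 1).log
      (by positivity) |>.const_mul (1 / 4) |>.congr_deriv ?_
    have := hc.ne'
    norm_num
    field_simp
    ring
  have hdiff (b₀ : ℝ) := (hasDerivAt_integral_sin_sq_div_mul_exp_neg hc b₀).fun_sub (hlog b₀)
  have := is_const_of_deriv_eq_zero (fun b₀ => (hdiff b₀).differentiableAt)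
    (fun b₀ => by rw [(hdiff b₀).deriv, sub_self]) b 0
  simpa [sub_eq_zero] using this

lemma hasSum_cosh_div_sinh (β : ℝ) {x : ℝ} (hx : 0 < x) :
    HasSum (fun n : ℕ => exp (-((2 * n + 1 - β) * x)) + exp (-((2 * n + 1 + β) * x)))
      (cosh (β * x) / sinh x) := by
  have hr : exp (-(2 * x)) < 1 := exp_lt_one_iff.2 (by linarith)
  have hterm : (fun n : ℕ => exp (-((2 * n + 1 - β) * x)) + exp (-((2 * n + 1 + β) * x)))
      = fun n => (exp ((β - 1) * x) + exp (-((β + 1) * x))) * exp (-(2 * x)) ^ n := by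
    ext n
    rw [← exp_nat_mul, right_distrib (exp _), ← exp_add, ← exp_add]
    ring_nf
  have hval : cosh (β * x) / sinh x
      = (exp ((β - 1) * x) + exp (-((β + 1) * x))) * (1 - exp (-(2 * x)))⁻¹ := by
    have h1 : 1 - exp (-(2 * x)) ≠ 0 := (sub_pos.2 hr).ne'
    have h2 : sinh x ≠ 0 := (sinh_pos_iff.2 hx).ne'
    rw [← div_eq_mul_inv, div_eq_div_iff h2 h1, cosh_eq, sinh_eq]
    rw [show (β - 1) * x = β * x - x by ring, show -((β + 1) * x) = -(β * x) - x by ring,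
      show -(2 * x) = -x - x by ring]
    simp only [exp_sub, exp_neg]
    field_simp
  rw [hterm, hval]
  exact (hasSum_geometric_of_lt_one (exp_pos _).le hr).mul_left _

lemma Finset.prod_range_two_mul {M : Type*} [CommMonoid M] (f : ℕ → M) (N : ℕ) :
    ∏ j ∈ Finset.range (2 * N), f j = ∏ k ∈ Finset.range N, (f (2 * k) * f (2 * k + 1)) := by
  induction N with
  | zero => simp
  | succ n ih =>
    rw [Nat.mul_succ, Finset.prod_range_succ, Finset.prod_range_succ, Finset.prod_range_succ, ih,
      mul_assoc]

lemma Complex.sin_pi_mul_div_two_ne_zero {z : ℂ} (hz : ∀ n : ℤ, z ≠ 2 * n) :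
    Complex.sin (π * z / 2) ≠ 0 := by
  rw [Ne, Complex.sin_eq_zero_iff]
  rintro ⟨k, hk⟩
  have hπ : (π : ℂ) ≠ 0 := Complex.ofReal_ne_zero.2 pi_ne_zero
  field_simp at hk
  exact hz k (by linear_combination hk)

lemma Complex.tendsto_euler_cos_prod {z : ℂ} (hz : ∀ n : ℤ, n ≠ 0 → z ≠ 2 * n) :
    Tendsto (fun N : ℕ => ∏ k ∈ Finset.range N, (1 - z ^ 2 / (2 * (k : ℂ) + 1) ^ 2)) atTop
      (𝓝 (Complex.cos (π * z / 2))) := by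
  rcases eq_or_ne z 0 with rfl | hz0
  · simp
  -- The factors of the sine product up to `2N` with odd denominators form the cosine product, those
  -- with even denominators the sine product for `z / 2` up to `N`; and
  -- `sin (π z) = 2 sin (π z / 2) cos (π z / 2)`.
  have hsin := Complex.sin_pi_mul_div_two_ne_zero fun n hn =>
    hz n (by rintro rfl; exact hz0 (by simpa using hn)) hn
  have hfull := (Complex.tendsto_euler_sin_prod z).comp
    (tendsto_id.const_mul_atTop' two_pos : Tendsto (fun N : ℕ => 2 * N) atTop atTop)
  have hhalf := Complex.tendsto_euler_sin_prod (z / 2)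
  have hlim := hfull.div (hhalf.const_mul 2) (mul_ne_zero two_ne_zero (by rwa [← mul_div_assoc]))
  have hval : Complex.sin (π * z) / (2 * Complex.sin (π * (z / 2))) = Complex.cos (π * z / 2) := by
    rw [show π * z = 2 * (π * z / 2) by ring, Complex.sin_two_mul, mul_div_assoc]
    field_simp
  refine (hval ▸ hlim).congr' ?_
  filter_upwards [hhalf.eventually_ne (by rwa [← mul_div_assoc])] with N hN
  have hodd : ∏ k ∈ Finset.range N, (1 - z ^ 2 / (((2 * k : ℕ) : ℂ) + 1) ^ 2)
      = ∏ k ∈ Finset.range N, (1 - z ^ 2 / (2 * (k : ℂ) + 1) ^ 2) := by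
    push_cast; rfl
  have heven : ∏ k ∈ Finset.range N, (1 - z ^ 2 / (((2 * k + 1 : ℕ) : ℂ) + 1) ^ 2)
      = ∏ k ∈ Finset.range N, (1 - (z / 2) ^ 2 / ((k : ℂ) + 1) ^ 2) := by
    refine Finset.prod_congr rfl fun k _ => ?_
    push_cast
    rw [div_pow, div_div, show (2 * (k : ℂ) + 1 + 1) ^ 2 = 2 ^ 2 * ((k : ℂ) + 1) ^ 2 by ring]
  simp only [Pi.div_apply, Function.comp_apply, Finset.prod_range_two_mul,
    Finset.prod_mul_distrib, hodd, heven]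
  generalize ∏ k ∈ Finset.range N, (1 - z ^ 2 / (2 * (k : ℂ) + 1) ^ 2) = P
  generalize ∏ k ∈ Finset.range N, (1 - (z / 2) ^ 2 / ((k : ℂ) + 1) ^ 2) = Q at hN ⊢
  have hQ := right_ne_zero_of_mul hN
  field_simp

lemma one_add_sq_div_mul_one_add_sq_div {β m : ℝ} (hm : m ≠ 0) (hsub : m - β ≠ 0) (hadd : m + β ≠ 0)
    (t : ℝ) :
    (1 + (t / (m - β)) ^ 2) * (1 + (t / (m + β)) ^ 2)
      = Complex.normSq (1 - (β + t * Complex.I) ^ 2 / (m : ℂ) ^ 2) / (1 - (β / m) ^ 2) ^ 2 := by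
  have h : (1 : ℂ) - (β + t * Complex.I) ^ 2 / (m : ℂ) ^ 2
      = ((1 - (β ^ 2 - t ^ 2) / m ^ 2 : ℝ) : ℂ) + ((-(2 * β * t / m ^ 2) : ℝ) : ℂ) * Complex.I := by
    push_cast
    field_simp
    ring_nf
    rw [Complex.I_sq]
    ring
  have hβm : 1 - (β / m) ^ 2 ≠ 0 := by
    rw [div_pow, one_sub_div (pow_ne_zero 2 hm), sq_sub_sq]
    exact div_ne_zero (mul_ne_zero hadd hsub) (pow_ne_zero 2 hm)
  rw [h, Complex.normSq_add_mul_I, eq_div_iff (pow_ne_zero 2 hβm)]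
  field_simp
  ring

lemma Complex.normSq_cos_add_mul_I (x y : ℝ) :
    Complex.normSq (Complex.cos (x + y * Complex.I)) = Real.cos x ^ 2 + Real.sinh y ^ 2 := by
  rw [Complex.cos_add_mul_I, ← Complex.ofReal_cos, ← Complex.ofReal_cosh, ← Complex.ofReal_sin,
    ← Complex.ofReal_sinh, ← Complex.ofReal_mul, ← Complex.ofReal_mul, sub_eq_add_neg, ← neg_mul,
    ← Complex.ofReal_neg, Complex.normSq_add_mul_I]
  nlinarith [Real.cosh_sq y, Real.sin_sq_add_cos_sq x]

lemma Complex.ne_two_mul_int_of_abs_re_lt_two {z : ℂ} (hz : |z.re| < 2) (n : ℤ) (hn : n ≠ 0) :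
    z ≠ 2 * n := by
  rintro rfl
  have : (1 : ℝ) ≤ |(n : ℝ)| := by exact_mod_cast Int.one_le_abs hn
  simp only [Complex.mul_re, Complex.re_ofNat, Complex.intCast_re, Complex.im_ofNat,
    Complex.intCast_im, mul_zero, sub_zero, abs_mul, Nat.abs_ofNat] at hz
  linarith

lemma tendsto_prod_one_add_sq_div_odd {β : ℝ} (hβ : |β| < 1) (t : ℝ) :
    Tendsto (fun N : ℕ => ∏ n ∈ Finset.range N,
        (1 + (t / (2 * n + 1 - β)) ^ 2) * (1 + (t / (2 * n + 1 + β)) ^ 2)) atTop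
      (𝓝 ((cosh (t * π) + cos (β * π)) / (1 + cos (β * π)))) := by
  have hβ2 : |β| < 2 := hβ.trans one_lt_two
  have hw := Complex.tendsto_euler_cos_prod
    (Complex.ne_two_mul_int_of_abs_re_lt_two (z := β + t * Complex.I) (by simpa using hβ2))
  have hβprod : Tendsto (fun N : ℕ => ∏ n ∈ Finset.range N, (1 - (β / (2 * n + 1)) ^ 2)) atTop
      (𝓝 (cos (π * β / 2))) := by
    have := (Complex.continuous_re.tendsto _).comp
      (Complex.tendsto_euler_cos_prod
        (Complex.ne_two_mul_int_of_abs_re_lt_two (z := β) (by simpa using hβ2)))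
    convert this using 2 with N
    · rw [Function.comp_apply]
      norm_cast
      simp [div_pow]
    · rw [← Complex.cos_ofReal_re]
      push_cast
      rfl
  have hcos : cos (π * β / 2) ≠ 0 := by
    refine (cos_pos_of_mem_Ioo ⟨?_, ?_⟩).ne' <;> nlinarith [abs_lt.1 hβ, pi_pos]
  have hlim := ((Complex.continuous_normSq.tendsto _).comp hw).div (hβprod.pow 2)
    (pow_ne_zero 2 hcos)
  have hfac (n : ℕ) : (1 + (t / (2 * n + 1 - β)) ^ 2) * (1 + (t / (2 * n + 1 + β)) ^ 2)
      = Complex.normSq (1 - (β + t * Complex.I) ^ 2 / (2 * (n : ℂ) + 1) ^ 2)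
        / (1 - (β / (2 * n + 1)) ^ 2) ^ 2 := by
    have hn : (0 : ℝ) ≤ n := n.cast_nonneg
    have := one_add_sq_div_mul_one_add_sq_div (m := 2 * n + 1) (β := β) (by positivity)
      (by linarith [abs_lt.1 hβ]) (by linarith [abs_lt.1 hβ]) t
    exact_mod_cast this
  convert hlim using 2 with N
  · simp only [hfac, Finset.prod_div_distrib, Finset.prod_pow, map_prod, Pi.div_apply,
      Function.comp_apply]
  · rw [show (π : ℂ) * (β + t * Complex.I) / 2 = (π * β / 2 : ℝ) + (π * t / 2 : ℝ) * Complex.I by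
      push_cast; ring, Complex.normSq_cos_add_mul_I]
    have hcos_sq : cos (π * β / 2) ^ 2 = (1 + cos (β * π)) / 2 := by
      rw [cos_sq, show 2 * (π * β / 2) = β * π by ring]
      ring
    have hsinh_sq : sinh (π * t / 2) ^ 2 = (cosh (t * π) - 1) / 2 := by
      rw [show t * π = 2 * (π * t / 2) by ring, cosh_two_mul, cosh_sq]
      ring
    have hden : 1 + cos (β * π) ≠ 0 := by
      intro h; apply hcos; rw [← sq_eq_zero_iff, hcos_sq, h, zero_div]
    rw [hcos_sq, hsinh_sq]
    field_simp
    ring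

lemma hasSum_log_one_add_sq_div_odd {β : ℝ} (hβ : |β| < 1) (t : ℝ) :
    HasSum (fun n : ℕ => log (1 + (t / (2 * n + 1 - β)) ^ 2) + log (1 + (t / (2 * n + 1 + β)) ^ 2))
      (log ((cosh (t * π) + cos (β * π)) / (1 + cos (β * π)))) := by
  have hprod := tendsto_prod_one_add_sq_div_odd hβ t
  have hfac (n : ℕ) : 1 ≤ (1 + (t / (2 * n + 1 - β)) ^ 2) * (1 + (t / (2 * n + 1 + β)) ^ 2) :=
    one_le_mul_of_one_le_of_one_le (le_add_of_nonneg_right (sq_nonneg _))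
      (le_add_of_nonneg_right (sq_nonneg _))
  have hR : 0 < (cosh (t * π) + cos (β * π)) / (1 + cos (β * π)) :=
    zero_lt_one.trans_le (ge_of_tendsto' hprod fun N => Finset.one_le_prod fun n _ => hfac n)
  have hterm (n : ℕ) : log (1 + (t / (2 * n + 1 - β)) ^ 2) + log (1 + (t / (2 * n + 1 + β)) ^ 2)
      = log ((1 + (t / (2 * n + 1 - β)) ^ 2) * (1 + (t / (2 * n + 1 + β)) ^ 2)) :=
    (log_mul (by positivity) (by positivity)).symm
  rw [hasSum_iff_tendsto_nat_of_nonneg fun n => hterm n ▸ log_nonneg (hfac n)]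
  refine (((continuousAt_log (by positivity)).tendsto).comp hprod).congr fun N => ?_
  rw [Function.comp_apply, log_prod fun n _ => (by positivity)]
  exact Finset.sum_congr rfl fun n _ => (hterm n).symm

lemma hasSum_sin_sq_mul_cosh_div_sinh (a β : ℝ) {x : ℝ} (hx : 0 < x) :
    HasSum (fun n : ℕ => sin (a * x) ^ 2 / x * exp (-((2 * n + 1 - β) * x))
        + sin (a * x) ^ 2 / x * exp (-((2 * n + 1 + β) * x)))
      (sin (a * x) ^ 2 * cosh (β * x) / (x * sinh x)) := by
  rw [show sin (a * x) ^ 2 * cosh (β * x) / (x * sinh x)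
      = sin (a * x) ^ 2 / x * (cosh (β * x) / sinh x) by ring]
  simpa only [mul_add] using (hasSum_cosh_div_sinh β hx).mul_left (sin (a * x) ^ 2 / x)

theorem stmt_12 (a β : ℝ) (hβ : |β| < 1) :
    ∫ x in Set.Ioi (0:ℝ), Real.sin (a * x) ^ 2 * Real.cosh (β * x) / (x * Real.sinh x) =
      (1 / 4) * Real.log ((Real.cosh (2 * a * π) + Real.cos (β * π)) /
        (1 + Real.cos (β * π))) := by
  have hc (n : ℕ) : 0 < 2 * (n : ℝ) + 1 - β ∧ 0 < 2 * (n : ℝ) + 1 + β := by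
    have := abs_lt.1 hβ
    constructor <;> linarith [n.cast_nonneg (α := ℝ)]
  let g (n : ℕ) (x : ℝ) : ℝ := sin (a * x) ^ 2 / x * exp (-((2 * n + 1 - β) * x))
    + sin (a * x) ^ 2 / x * exp (-((2 * n + 1 + β) * x))
  have hint (n : ℕ) : IntegrableOn (g n) (Ioi 0) :=
    (integrableOn_sin_sq_div_mul_exp_neg (hc n).1 a).add
      (integrableOn_sin_sq_div_mul_exp_neg (hc n).2 a)
  have hval (n : ℕ) : ∫ x in Ioi (0:ℝ), g n x = 1 / 4 *
      (log (1 + (2 * a / (2 * n + 1 - β)) ^ 2) + log (1 + (2 * a / (2 * n + 1 + β)) ^ 2)) := by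
    rw [integral_add (integrableOn_sin_sq_div_mul_exp_neg (hc n).1 a)
      (integrableOn_sin_sq_div_mul_exp_neg (hc n).2 a), integral_sin_sq_div_mul_exp_neg (hc n).1,
      integral_sin_sq_div_mul_exp_neg (hc n).2, mul_add]
  have hnorm (n : ℕ) : ∫ x in Ioi (0:ℝ), ‖g n x‖ = ∫ x in Ioi (0:ℝ), g n x :=
    setIntegral_congr_fun measurableSet_Ioi fun x (hx : 0 < x) => norm_of_nonneg (by positivity)
  have hsum := (hasSum_log_one_add_sq_div_odd hβ (2 * a)).mul_left (1 / 4)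
  have hterms := hasSum_integral_of_summable_integral_norm hint
    (by simp_rw [hnorm, hval]; exact hsum.summable)
  rw [setIntegral_congr_fun measurableSet_Ioi
      fun x (hx : 0 < x) => (hasSum_sin_sq_mul_cosh_div_sinh a β hx).tsum_eq.symm,
    ← hterms.tsum_eq]
  simp_rw [hval]
  rw [hsum.tsum_eq]
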